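/- Let (X,d) be a compact metric space and let φ, φ̂ : X → X be homeomorphisms that are topologically conjugate by a homeomorphism g : X → X, i.e. g ∘ φ = φ̂ ∘ g. Let μ be an ergodic Borel probability measure for φ, and let ν be a Borel probability measure absolutely continuous with respect to μ. Suppose g⁻¹ is nonsingular with respect to μ, i.e. (g⁻¹)_*μ ≪ μ. Then limsup_{T→∞} d_P( (1/T) Σ_{t=0}^{T-1} φ^t_*ν, (1/T) Σ_{t=0}^{T-1} φ̂^t_*ν ) ≤ d_P(μ, g_*μ). -/

import Mathlib

/-!
By von Neumann's mean ergodic theorem, the Birkhoff averages of a bounded measurable `f` converge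
to `∫ f dμ` in `L²(μ)`, hence in `μ`-measure; as `ν ≪ μ`, dominated convergence along
a.e.-convergent subsequences gives `∫ (Birkhoff average of f) dν → ∫ f dμ`. So the Cesàro
averages of `φ^t_* ν` converge weakly to `μ`. Since `φ̂^t = g ∘ φ^t ∘ g⁻¹`, the Cesàro averages
of `φ̂^t_* ν` are the `g`-images of those of `φ^t_* (g⁻¹_* ν)`, and `g⁻¹_* ν ≪ μ` because `g⁻¹`
is nonsingular; so they converge weakly to `g_* μ`, and the triangle inequality for `d_P`
finishes the proof.
-/

open MeasureTheory Filter Topology ENNReal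

noncomputable section

/-- Pushforward of a probability measure under a measurable map. -/
def pushPM {α β : Type*} [MeasurableSpace α] [MeasurableSpace β]
    (f : α → β) (hf : Measurable f) (ν : ProbabilityMeasure α) : ProbabilityMeasure β :=
  ⟨(ν : Measure α).map f, Measure.isProbabilityMeasure_map hf.aemeasurable⟩

/-- Cesàro average `(1/(T+1)) ∑_{t=0}^{T} s t` of a sequence of probability measures. -/
def avgPM {α : Type*} [MeasurableSpace α] (s : ℕ → ProbabilityMeasure α) (T : ℕ) :
    ProbabilityMeasure α :=
  ⟨((T + 1 : ℕ) : ℝ≥0∞)⁻¹ • ∑ t ∈ Finset.range (T + 1), (s t : Measure α), by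
    constructor
    simp only [Measure.smul_apply, Measure.finset_sum_apply, measure_univ, Finset.sum_const,
      Finset.card_range, nsmul_eq_mul, mul_one, smul_eq_mul]
    rw [ENNReal.inv_mul_cancel] <;> simp⟩

/-- `μ` is an invariant measure of `f` and every invariant Borel set has measure `0` or `1`. -/
def IsErgodicM {α : Type*} [MeasurableSpace α] (f : α → α) (μ : Measure α) : Prop :=
  μ.map f = μ ∧ ∀ A : Set α, MeasurableSet A → f ⁻¹' A = A → μ A = 0 ∨ μ A = 1

section PushAverage

variable {X Y : Type*} [MeasurableSpace X] [MeasurableSpace Y]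

lemma integral_avgPM {E : Type*} [NormedAddCommGroup E] [NormedSpace ℝ E]
    (s : ℕ → ProbabilityMeasure X) (T : ℕ) {f : X → E}
    (hf : ∀ t, Integrable f (s t : Measure X)) :
    ∫ x, f x ∂(avgPM s T : Measure X)
      = ((T + 1 : ℕ) : ℝ)⁻¹ • ∑ t ∈ Finset.range (T + 1), ∫ x, f x ∂(s t : Measure X) := by
  change ∫ x, f x ∂(((T + 1 : ℕ) : ℝ≥0∞)⁻¹ • ∑ t ∈ Finset.range (T + 1), (s t : Measure X)) = _
  rw [integral_smul_measure, integral_finsetSum_measure (fun t _ => hf t), ENNReal.toReal_inv,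
    ENNReal.toReal_natCast]

lemma pushPM_avgPM {f : X → Y} (hf : Measurable f) (s : ℕ → ProbabilityMeasure X) (T : ℕ) :
    pushPM f hf (avgPM s T) = avgPM (fun t => pushPM f hf (s t)) T := by
  apply Subtype.ext
  change Measure.map f (_ • _) = _ • _
  rw [Measure.map_smul, Measure.map_finset_sum hf.aemeasurable]
  rfl

lemma pushPM_eq_map {f : X → Y} (hf : Measurable f) (ν : ProbabilityMeasure X) :
    pushPM f hf ν = ν.map hf.aemeasurable :=
  rfl

lemma integral_avgPM_pushPM_iterate {E : Type*} [NormedAddCommGroup E] [NormedSpace ℝ E]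
    {φ : X → X} (hφ : Measurable φ) (ν : ProbabilityMeasure X) (T : ℕ) {f : X → E}
    (hf : StronglyMeasurable f) {C : ℝ} (hf_bound : ∀ x, ‖f x‖ ≤ C) :
    ∫ x, f x ∂(avgPM (fun t => pushPM φ^[t] (hφ.iterate t) ν) T : Measure X)
      = ∫ x, birkhoffAverage ℝ φ f (T + 1) x ∂ν := by
  have hint : ∀ (m : Measure X) [IsFiniteMeasure m] (t : ℕ), Integrable (fun x => f (φ^[t] x)) m :=
    fun m _ t => .of_bound (hf.comp_measurable (hφ.iterate t)).aestronglyMeasurable C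
      (ae_of_all _ fun x => hf_bound _)
  rw [integral_avgPM _ _ (f := f) fun _ => hint _ 0]
  have hsum : ∫ x, birkhoffAverage ℝ φ f (T + 1) x ∂ν
      = ((T + 1 : ℕ) : ℝ)⁻¹ • ∑ t ∈ Finset.range (T + 1), ∫ x, f (φ^[t] x) ∂ν := by
    rw [← integral_finsetSum _ fun t _ => hint _ t, ← integral_smul]
    rfl
  rw [hsum]
  congr 1
  refine Finset.sum_congr rfl fun t _ => integral_map (hφ.iterate t).aemeasurable
    hf.aestronglyMeasurable

lemma pushPM_iterate_pushPM_of_semiconj {g : X → Y} (hg : Measurable g) {φ : X → X} {ψ : Y → Y}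
    (hφ : Measurable φ) (hψ : Measurable ψ) (hgφψ : Function.Semiconj g φ ψ)
    (ν : ProbabilityMeasure X) (t : ℕ) :
    pushPM ψ^[t] (hψ.iterate t) (pushPM g hg ν) = pushPM g hg (pushPM φ^[t] (hφ.iterate t) ν) := by
  apply Subtype.ext
  change Measure.map _ (Measure.map _ _) = Measure.map _ (Measure.map _ _)
  rw [Measure.map_map (hψ.iterate t) hg, Measure.map_map hg (hφ.iterate t)]
  congr 1
  funext x
  exact (hgφψ.iterate_right t x).symm

end PushAverage

lemma IsErgodicM.ergodic {α : Type*} [MeasurableSpace α] {f : α → α} {μ : Measure α}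
    [IsProbabilityMeasure μ] (hf : Measurable f) (h : IsErgodicM f μ) : Ergodic f μ := by
  refine ⟨⟨hf, h.1⟩, ⟨fun s hs hfs => ?_⟩⟩
  rw [Filter.eventuallyConst_set']
  rcases h.2 s hs hfs with h0 | h1
  · exact Or.inl (ae_eq_empty.mpr h0)
  · exact Or.inr (ae_eq_univ.mpr ((prob_compl_eq_zero_iff hs).mpr h1))

section MeanErgodic

variable {X : Type*} [MeasurableSpace X] {μ : Measure X} {φ : X → X}

lemma MeasureTheory.Lp.coeFn_birkhoffSum_compMeasurePreserving {E : Type*} [NormedAddCommGroup E]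
    {p : ℝ≥0∞} (hφ : MeasurePreserving φ μ μ) (F : Lp E p μ) (n : ℕ) :
    ⇑(birkhoffSum (Lp.compMeasurePreserving φ hφ) id n F) =ᵐ[μ] birkhoffSum φ F n := by
  induction n with
  | zero => simpa using Lp.coeFn_zero E p μ
  | succ n ih =>
    have hiter : ⇑((Lp.compMeasurePreserving φ hφ)^[n] F) =ᵐ[μ] F ∘ φ^[n] := by
      rw [Lp.compMeasurePreserving_iterate]
      exact Lp.coeFn_compMeasurePreserving F _
    filter_upwards [Lp.coeFn_add (birkhoffSum (Lp.compMeasurePreserving φ hφ) id n F)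
      ((Lp.compMeasurePreserving φ hφ)^[n] F), ih, hiter] with x hadd hsum hlast
    rw [birkhoffSum_succ, birkhoffSum_succ, id, hadd, Pi.add_apply, hsum, hlast]
    rfl

lemma MeasureTheory.Lp.coeFn_birkhoffAverage_compMeasurePreserving {E : Type*}
    [NormedAddCommGroup E] [NormedSpace ℝ E] {p : ℝ≥0∞} (hφ : MeasurePreserving φ μ μ) (F : Lp E p μ) (n : ℕ) :
    ⇑(birkhoffAverage ℝ (Lp.compMeasurePreserving φ hφ) id n F)
      =ᵐ[μ] birkhoffAverage ℝ φ F n := by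
  filter_upwards [Lp.coeFn_smul (n : ℝ)⁻¹ (birkhoffSum (Lp.compMeasurePreserving φ hφ) id n F),
    Lp.coeFn_birkhoffSum_compMeasurePreserving hφ F n] with x hsmul hsum
  rw [birkhoffAverage, hsmul, Pi.smul_apply, hsum]
  rfl

lemma Ergodic.eq_Lp_const_of_compMeasurePreserving_eq {E : Type*} [NormedAddCommGroup E]
    [Nonempty E] {p : ℝ≥0∞} [IsFiniteMeasure μ] (h : Ergodic φ μ) {F : Lp E p μ}
    (hF : Lp.compMeasurePreserving φ h.toMeasurePreserving F = F) :
    ∃ c, F = Lp.const p μ c := by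
  obtain ⟨c, hc⟩ := h.eq_const_of_compMeasurePreserving_eq (g := (F : X →ₘ[μ] E))
    (congrArg Subtype.val hF)
  exact ⟨c, Subtype.ext hc⟩

theorem Ergodic.tendsto_birkhoffAverage_compMeasurePreserving [IsProbabilityMeasure μ]
    (h : Ergodic φ μ) (F : Lp ℝ 2 μ) :
    Tendsto (fun n => birkhoffAverage ℝ (Lp.compMeasurePreserving φ h.toMeasurePreserving) id n F)
      atTop (𝓝 (Lp.const 2 μ (∫ x, F x ∂μ))) := by
  set U := (Lp.compMeasurePreservingₗᵢ ℝ φ h.toMeasurePreserving (E := ℝ) (p := 2)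
    ).toContinuousLinearMap
  set c := ∫ x, F x ∂μ
  have hconst_fixed : Lp.const 2 μ c ∈ U.eqLocus (1 : Lp ℝ 2 μ →L[ℝ] Lp ℝ 2 μ) := by
    rfl
  have horth : ∀ w ∈ U.eqLocus (1 : Lp ℝ 2 μ →L[ℝ] Lp ℝ 2 μ),
      inner ℝ (F - Lp.const 2 μ c) w = 0 := by
    intro w hw
    obtain ⟨k, rfl⟩ := h.eq_Lp_const_of_compMeasurePreserving_eq hw
    have hinner : (fun x => inner ℝ ((F - Lp.const 2 μ c) x) (Lp.const 2 μ k x))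
        =ᵐ[μ] fun x => (F x - c) * k := by
      filter_upwards [Lp.coeFn_sub F (Lp.const 2 μ c), Lp.coeFn_const (p := 2) (μ := μ) c,
        Lp.coeFn_const (p := 2) (μ := μ) k] with x hsub hc hk
      rw [hsub, Pi.sub_apply, hc, hk]
      simp [mul_comm]
    rw [L2.inner_def, integral_congr_ae hinner, integral_mul_const,
      integral_sub ((Lp.memLp F).integrable one_le_two) (integrable_const c)]
    simp [c]
  -- By ergodicity the invariant vectors are the constants, so projecting onto them is `∫ · dμ`.
  have hproj : (Submodule.orthogonalProjectionOnto
      (U.eqLocus (1 : Lp ℝ 2 μ →L[ℝ] Lp ℝ 2 μ)) F : Lp ℝ 2 μ) = Lp.const 2 μ c :=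
    Submodule.eq_starProjection_of_mem_of_inner_eq_zero hconst_fixed horth
  have := U.tendsto_birkhoffAverage_orthogonalProjection
    (LinearIsometry.norm_toContinuousLinearMap_le _) F
  rwa [hproj] at this

end MeanErgodic

lemma norm_birkhoffAverage_le {α E : Type*} [SeminormedAddCommGroup E] [NormedSpace ℝ E]
    (φ : α → α) {f : α → E} {C : ℝ} (hf : ∀ x, ‖f x‖ ≤ C) (n : ℕ) (x : α) :
    ‖birkhoffAverage ℝ φ f n x‖ ≤ C := by
  rcases Nat.eq_zero_or_pos n with rfl | hn
  · simpa using (norm_nonneg _).trans (hf x)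
  calc ‖birkhoffAverage ℝ φ f n x‖
      ≤ (n : ℝ)⁻¹ * ∑ k ∈ Finset.range n, ‖f (φ^[k] x)‖ := by
        rw [birkhoffAverage, birkhoffSum, norm_smul, norm_inv, Real.norm_natCast]
        gcongr
        exact norm_sum_le _ _
    _ ≤ (n : ℝ)⁻¹ * ∑ k ∈ Finset.range n, C := by gcongr; exact hf _
    _ = C := by field_simp; simp

section ErgodicAverages

variable {X : Type*} [MeasurableSpace X] {μ ν : Measure X} {φ : X → X}

theorem Ergodic.tendstoInMeasure_birkhoffAverage [IsProbabilityMeasure μ] (h : Ergodic φ μ)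
    {f : X → ℝ} (hf : MemLp f 2 μ) :
    TendstoInMeasure μ (birkhoffAverage ℝ φ f) atTop (fun _ => ∫ x, f x ∂μ) := by
  have hLp := tendstoInMeasure_of_tendsto_Lp
    (h.tendsto_birkhoffAverage_compMeasurePreserving (hf.toLp f))
  refine hLp.congr (fun n => ?_) ?_
  · exact (Lp.coeFn_birkhoffAverage_compMeasurePreserving _ _ n).trans
      (h.quasiMeasurePreserving.birkhoffAverage_ae_eq_of_ae_eq ℝ hf.coeFn_toLp n)
  · rw [integral_congr_ae hf.coeFn_toLp]
    exact Lp.coeFn_const (p := 2) (μ := μ) _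

theorem MeasureTheory.TendstoInMeasure.tendsto_integral_of_absolutelyContinuous {E : Type*}
    [NormedAddCommGroup E] [NormedSpace ℝ E] [IsFiniteMeasure ν] {F : ℕ → X → E} {G : X → E}
    {C : ℝ} (hFG : TendstoInMeasure μ F atTop G) (hνμ : ν ≪ μ)
    (hF_meas : ∀ n, AEStronglyMeasurable (F n) ν) (hF_bound : ∀ n, ∀ᵐ x ∂ν, ‖F n x‖ ≤ C) :
    Tendsto (fun n => ∫ x, F n x ∂ν) atTop (𝓝 (∫ x, G x ∂ν)) := by
  -- Every subsequence has a further subsequence converging `μ`-a.e., hence `ν`-a.e.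
  refine tendsto_of_subseq_tendsto fun ns hns => ?_
  obtain ⟨ms, -, hae⟩ := (hFG.comp hns).exists_seq_tendsto_ae
  exact ⟨ms, tendsto_integral_of_dominated_convergence (fun _ => C) (fun _ => hF_meas _)
    (integrable_const C) (fun _ => hF_bound _) (hνμ.ae_le hae)⟩

theorem Ergodic.tendsto_integral_birkhoffAverage [IsProbabilityMeasure μ] [IsProbabilityMeasure ν]
    (h : Ergodic φ μ) (hνμ : ν ≪ μ) {f : X → ℝ} (hf : StronglyMeasurable f) {C : ℝ}
    (hf_bound : ∀ x, ‖f x‖ ≤ C) :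
    Tendsto (fun n => ∫ x, birkhoffAverage ℝ φ f n x ∂ν) atTop (𝓝 (∫ x, f x ∂μ)) := by
  have hf_memLp : MemLp f 2 μ := MemLp.of_bound hf.aestronglyMeasurable C (ae_of_all _ hf_bound)
  have hmeas : ∀ n, AEStronglyMeasurable (birkhoffAverage ℝ φ f n) ν := fun n =>
    ((Finset.stronglyMeasurable_fun_sum (Finset.range n) fun k _ =>
      hf.comp_measurable (h.measurable.iterate k)).const_smul (n : ℝ)⁻¹).aestronglyMeasurable
  simpa using (h.tendstoInMeasure_birkhoffAverage hf_memLp).tendsto_integral_of_absolutelyContinuous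
    hνμ hmeas fun n => ae_of_all _ (norm_birkhoffAverage_le φ hf_bound n)

end ErgodicAverages

section WeakConvergence

variable {X Y : Type*} [TopologicalSpace X] [MeasurableSpace X] [BorelSpace X]
  [TopologicalSpace Y] [MeasurableSpace Y] [BorelSpace Y]

theorem Ergodic.tendsto_avgPM_pushPM_iterate {φ : X → X} {μ : ProbabilityMeasure X}
    (h : Ergodic φ μ) {ν : ProbabilityMeasure X} (hνμ : (ν : Measure X) ≪ μ) :
    Tendsto (avgPM fun t => pushPM φ^[t] (h.measurable.iterate t) ν) atTop (𝓝 μ) := by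
  refine ProbabilityMeasure.tendsto_iff_forall_integral_tendsto.mpr fun f => ?_
  refine ((h.tendsto_integral_birkhoffAverage hνμ f.continuous.stronglyMeasurable
    f.norm_coe_le_norm).comp (tendsto_add_atTop_nat 1)).congr fun T => ?_
  exact (integral_avgPM_pushPM_iterate h.measurable _ _ f.continuous.stronglyMeasurable
    f.norm_coe_le_norm).symm

theorem Ergodic.tendsto_avgPM_pushPM_iterate_of_semiconj (g : X ≃ₜ Y) {φ : X → X} {ψ : Y → Y}
    {μ : ProbabilityMeasure X} (h : Ergodic φ μ) (hψ : Measurable ψ)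
    (hgφψ : Function.Semiconj g φ ψ) {ν : ProbabilityMeasure Y}
    (hνμ : (ν : Measure Y).map g.symm ≪ μ) :
    Tendsto (avgPM fun t => pushPM ψ^[t] (hψ.iterate t) ν) atTop
      (𝓝 (pushPM g g.continuous.measurable μ)) := by
  set ν' := pushPM g.symm g.symm.continuous.measurable ν
  have hν : pushPM g g.continuous.measurable ν' = ν := by
    apply Subtype.ext
    change Measure.map _ (Measure.map _ _) = _
    rw [Measure.map_map g.continuous.measurable g.symm.continuous.measurable, g.self_comp_symm,
      Measure.map_id]
    rfl
  have havg : (avgPM fun t => pushPM ψ^[t] (hψ.iterate t) ν) = fun T =>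
      (avgPM (fun t => pushPM φ^[t] (h.measurable.iterate t) ν') T).map
        g.continuous.measurable.aemeasurable := by
    funext T
    rw [← pushPM_eq_map g.continuous.measurable, pushPM_avgPM]
    congr 1
    funext t
    rw [← pushPM_iterate_pushPM_of_semiconj _ h.measurable hψ hgφψ, hν]
  rw [havg]
  exact ((ProbabilityMeasure.continuous_map g.continuous).tendsto _).comp
    (h.tendsto_avgPM_pushPM_iterate hνμ)

end WeakConvergence

section TriangleFunction

variable {P : Type*} {d : P → P → ℝ}

lemma nonneg_of_triangle (hsymm : ∀ a b, d a b = d b a) (htri : ∀ a b c, d a c ≤ d a b + d b c)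
    (hself : ∀ a, d a a = 0) (a b : P) : 0 ≤ d a b := by
  linarith [htri a b a, hsymm a b, hself a]

variable [TopologicalSpace P]

lemma eventually_nhds_lt_of_triangle (htri : ∀ a b c, d a c ≤ d a b + d b c)
    (hopen : ∀ s : Set P, (∀ a ∈ s, ∃ ε > (0 : ℝ), ∀ b, d a b < ε → b ∈ s) → IsOpen s)
    {a : P} (hself : d a a = 0) {ε : ℝ} (hε : 0 < ε) : ∀ᶠ b in 𝓝 a, d a b < ε := by
  refine (hopen {b | d a b < ε} fun b hb => ⟨ε - d a b, sub_pos.mpr hb, fun c hc => ?_⟩).mem_nhds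
    (by simpa [hself] using hε)
  show d a c < ε
  linarith [htri a b c]

lemma limsup_le_of_tendsto_of_triangle {ι : Type*} {l : Filter ι} [l.NeBot]
    (hsymm : ∀ a b, d a b = d b a) (htri : ∀ a b c, d a c ≤ d a b + d b c)
    (hself : ∀ a, d a a = 0) (hball : ∀ a, ∀ ε > 0, ∀ᶠ b in 𝓝 a, d a b < ε)
    {u v : ι → P} {a b : P} (hu : Tendsto u l (𝓝 a)) (hv : Tendsto v l (𝓝 b)) :
    limsup (fun i => d (u i) (v i)) l ≤ d a b := by
  refine le_of_forall_pos_le_add fun ε hε => limsup_le_of_le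
    (isCoboundedUnder_le_of_le l fun i => nonneg_of_triangle hsymm htri hself _ _) ?_
  filter_upwards [hu.eventually (hball a (ε / 2) (half_pos hε)),
    hv.eventually (hball b (ε / 2) (half_pos hε))] with i hua hvb
  linarith [htri (u i) a (v i), htri a b (v i), hsymm (u i) a]

end TriangleFunction

theorem statement3_general {X : Type*} [MetricSpace X]
    [MeasurableSpace X] [BorelSpace X]
    (φ φh g : X ≃ₜ X) (hconj : ∀ x, g (φ x) = φh (g x))
    -- `dP` is a metric on `P(X)` metrizing the weak topology:
    (dP : ProbabilityMeasure X → ProbabilityMeasure X → ℝ)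
    (hdP_symm : ∀ a b, dP a b = dP b a)
    (hdP_tri : ∀ a b c, dP a c ≤ dP a b + dP b c)
    (hdP_eq : ∀ a b, dP a b = 0 ↔ a = b)
    (hdP_top : ∀ s : Set (ProbabilityMeasure X),
      IsOpen s ↔ ∀ a ∈ s, ∃ ε > (0 : ℝ), ∀ b, dP a b < ε → b ∈ s)
    (μ ν : ProbabilityMeasure X)
    (herg : IsErgodicM ⇑φ (μ : Measure X))
    (habs : (ν : Measure X) ≪ (μ : Measure X))
    (hns : (μ : Measure X).map ⇑g.symm ≪ (μ : Measure X)) :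
    Filter.limsup
      (fun T : ℕ => dP
        (avgPM (fun t => pushPM (⇑φ)^[t] (φ.continuous.measurable.iterate t) ν) T)
        (avgPM (fun t => pushPM (⇑φh)^[t] (φh.continuous.measurable.iterate t) ν) T))
      atTop
      ≤ dP μ (pushPM ⇑g g.continuous.measurable μ) := by
  have hself : ∀ a, dP a a = 0 := fun a => (hdP_eq a a).mpr rfl
  have hergodic : Ergodic φ (μ : Measure X) := herg.ergodic φ.continuous.measurable
  have hlim : Tendsto (avgPM fun t => pushPM (⇑φ)^[t] (φ.continuous.measurable.iterate t) ν)
      atTop (𝓝 μ) :=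
    hergodic.tendsto_avgPM_pushPM_iterate habs
  have hlim_conj : Tendsto
      (avgPM fun t => pushPM (⇑φh)^[t] (φh.continuous.measurable.iterate t) ν) atTop
      (𝓝 (pushPM g g.continuous.measurable μ)) :=
    hergodic.tendsto_avgPM_pushPM_iterate_of_semiconj g φh.continuous.measurable hconj
      ((habs.map g.symm.continuous.measurable).trans hns)
  exact limsup_le_of_tendsto_of_triangle hdP_symm hdP_tri hself
    (fun a _ hε => eventually_nhds_lt_of_triangle hdP_tri (fun s => (hdP_top s).mpr) (hself a) hε)
    hlim hlim_conj

/-- For conjugate homeomorphisms `φ, φ̂` of a compact metric space, `μ` ergodic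
for `φ`, `ν ≪ μ`, and `g⁻¹` nonsingular w.r.t. `μ`, the Cesàro averages of the two transported
measures stay asymptotically within `dP(μ, g_*μ)` of each other. -/
theorem statement3 {X : Type*} [MetricSpace X] [CompactSpace X]
    [MeasurableSpace X] [BorelSpace X]
    (φ φh g : X ≃ₜ X) (hconj : ∀ x, g (φ x) = φh (g x))
    -- `dP` is a metric on `P(X)` metrizing the weak topology:
    (dP : ProbabilityMeasure X → ProbabilityMeasure X → ℝ)
    (hdP_symm : ∀ a b, dP a b = dP b a)
    (hdP_tri : ∀ a b c, dP a c ≤ dP a b + dP b c)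
    (hdP_eq : ∀ a b, dP a b = 0 ↔ a = b)
    (hdP_top : ∀ s : Set (ProbabilityMeasure X),
      IsOpen s ↔ ∀ a ∈ s, ∃ ε > (0 : ℝ), ∀ b, dP a b < ε → b ∈ s)
    (μ ν : ProbabilityMeasure X)
    (herg : IsErgodicM ⇑φ (μ : Measure X))
    (habs : (ν : Measure X) ≪ (μ : Measure X))
    (hns : (μ : Measure X).map ⇑g.symm ≪ (μ : Measure X)) :
    Filter.limsup
      (fun T : ℕ => dP
        (avgPM (fun t => pushPM (⇑φ)^[t] (φ.continuous.measurable.iterate t) ν) T)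
        (avgPM (fun t => pushPM (⇑φh)^[t] (φh.continuous.measurable.iterate t) ν) T))
      atTop
      ≤ dP μ (pushPM ⇑g g.continuous.measurable μ) :=
  statement3_general φ φh g hconj dP hdP_symm hdP_tri hdP_eq hdP_top μ ν herg habs hns

end
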